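/- arXiv:2305.16186 — 2 statements merged into one kernel-verified Lean document; each statement's English description precedes it below -/
import Mathlib

section
/- Let M and N be finite-dimensional, uniquely geodesic metric spaces and let X ⊆ M, Y ⊆ N be geodesically convex subsets. Let f : X × Y → ℝ be such that f(·,y) is geodesically quasi-convex and lower semicontinuous for every y, and f(x,·) is geodesically quasi-concave and upper semicontinuous for every x. Then for any finitely many points y₁, …, y_k ∈ Y and any real number α < min_{x∈X} max_{i∈[k]} f(x, y_i), there exists y₀ ∈ Y such that α < min_{x∈X} f(x, y₀). -/
/-!
Formalization of a statement from
"Accelerated Methods for Riemannian Min-Max Optimization Ensuring Bounded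
Geometric Penalties".

Since Mathlib does not yet provide Riemannian geometry, we work with an
abstract model `RiemannianModel M E` of a uniquely geodesic Riemannian
manifold (in particular of a Hadamard manifold): a metric space `M` together
with an exponential map, its inverse `log`, and parallel transport, where all
tangent spaces are identified with a fixed real inner-product space `E`.
-/

noncomputable section

open scoped RealInnerProductSpace

/-- Abstract model of a uniquely geodesic Riemannian manifold. -/
structure RiemannianModel (M : Type*) [MetricSpace M] (E : Type*)
    [NormedAddCommGroup E] [InnerProductSpace ℝ E] where
  /-- The exponential map. -/
  exp : M → E → M
  /-- The inverse of the exponential map. -/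
  log : M → M → E
  /-- Parallel transport `Γ_p^q : T_p M → T_q M` along the unique geodesic. -/
  transport : M → M → E → E
  exp_log : ∀ x y, exp x (log x y) = y
  log_exp : ∀ x v, log x (exp x v) = v
  norm_log : ∀ x y, ‖log x y‖ = dist x y
  norm_transport : ∀ p q v, ‖transport p q v‖ = ‖v‖

namespace RiemannianModel

variable {M E : Type*} [MetricSpace M] [NormedAddCommGroup E] [InnerProductSpace ℝ E]

/-- The (unique) geodesic from `x` to `y`, parametrized on `[0,1]`. -/
def geodesic (R : RiemannianModel M E) (x y : M) (t : ℝ) : M :=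
  R.exp x (t • R.log x y)

/-- Geodesic convexity of a set. -/
def GConvexSet (R : RiemannianModel M E) (X : Set M) : Prop :=
  ∀ ⦃x⦄, x ∈ X → ∀ ⦃y⦄, y ∈ X → ∀ t ∈ Set.Icc (0 : ℝ) 1, R.geodesic x y t ∈ X

/-- `μ`-strong geodesic convexity of `f` on `X` (`μ = 0` is plain g-convexity). -/
def StrongGConvexOn (R : RiemannianModel M E) (X : Set M) (μ : ℝ) (f : M → ℝ) : Prop :=
  ∀ ⦃x⦄, x ∈ X → ∀ ⦃y⦄, y ∈ X → ∀ t ∈ Set.Icc (0 : ℝ) 1,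
    f (R.geodesic x y t) ≤ (1 - t) * f x + t * f y - μ / 2 * (t * (1 - t)) * dist x y ^ 2

/-- `μ`-strong geodesic concavity of `f` on `X`. -/
def StrongGConcaveOn (R : RiemannianModel M E) (X : Set M) (μ : ℝ) (f : M → ℝ) : Prop :=
  R.StrongGConvexOn X μ (fun x => - f x)

/-- First-order `μ`-strong g-convexity of a differentiable `f` with gradient field `g`. -/
def StrongGConvexGrad (R : RiemannianModel M E) (X : Set M) (μ : ℝ) (f : M → ℝ)
    (g : M → E) : Prop :=
  ∀ ⦃x⦄, x ∈ X → ∀ ⦃y⦄, y ∈ X →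
    f x + ⟪g x, R.log x y⟫ + μ / 2 * dist x y ^ 2 ≤ f y

/-- First-order `L`-smoothness of a differentiable `f` with gradient field `g`. -/
def SmoothGrad (R : RiemannianModel M E) (X : Set M) (L : ℝ) (f : M → ℝ)
    (g : M → E) : Prop :=
  ∀ ⦃x⦄, x ∈ X → ∀ ⦃y⦄, y ∈ X →
    f y ≤ f x + ⟪g x, R.log x y⟫ + L / 2 * dist x y ^ 2

/-- Comparison property characteristic of Hadamard manifolds: one half of the squared
distance to any point is `1`-strongly geodesically convex. -/
def HadamardComparison (R : RiemannianModel M E) : Prop :=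
  ∀ p : M, R.StrongGConvexOn Set.univ 1 (fun q => dist p q ^ 2 / 2)

end RiemannianModel

/-- The geometric constant `ζ_R`, for curvature bounded below by `κmin`:
`ζ_R = R√|κmin|·coth(R√|κmin|)` if `κmin < 0` and `1` otherwise. -/
def zetaConst (κmin R : ℝ) : ℝ :=
  if κmin < 0 then
    R * Real.sqrt |κmin| * Real.cosh (R * Real.sqrt |κmin|) / Real.sinh (R * Real.sqrt |κmin|)
  else 1

/-- The geometric constant `δ_R`, for curvature bounded above by `κmax`:
`δ_R = R√κmax·cot(R√κmax)` if `κmax > 0` and `1` otherwise. -/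
def deltaConst (κmax R : ℝ) : ℝ :=
  if 0 < κmax then
    R * Real.sqrt κmax * Real.cos (R * Real.sqrt κmax) / Real.sin (R * Real.sqrt κmax)
  else 1

section MinMax

variable {M N E F : Type*} [MetricSpace M] [MetricSpace N]
  [NormedAddCommGroup E] [InnerProductSpace ℝ E]
  [NormedAddCommGroup F] [InnerProductSpace ℝ F]

/-- `f` is `(μx,μy)`-SCSC (strongly g-convex/strongly g-concave) on `X × Y`. -/
def IsSCSCOn (RM : RiemannianModel M E) (RN : RiemannianModel N F)
    (X : Set M) (Y : Set N) (f : M → N → ℝ) (μx μy : ℝ) : Prop :=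
  (∀ y ∈ Y, RM.StrongGConvexOn X μx (fun x => f x y)) ∧
  (∀ x ∈ X, RN.StrongGConcaveOn Y μy (fun y => f x y))

/-- `f` is `(Lx,Ly,Lxy)`-smooth on `X × Y`, expressed through the partial gradient
fields `gx`, `gy` and parallel transport. -/
def IsSmoothPairOn (RM : RiemannianModel M E) (RN : RiemannianModel N F)
    (X : Set M) (Y : Set N) (gx : M → N → E) (gy : M → N → F)
    (Lx Ly Lxy : ℝ) : Prop :=
  (∀ y ∈ Y, ∀ x ∈ X, ∀ x' ∈ X, ‖gx x y - RM.transport x' x (gx x' y)‖ ≤ Lx * dist x x') ∧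
  (∀ x ∈ X, ∀ y ∈ Y, ∀ y' ∈ Y, ‖gy x y - RN.transport y' y (gy x y')‖ ≤ Ly * dist y y') ∧
  (∀ x ∈ X, ∀ y ∈ Y, ∀ y' ∈ Y, ‖gx x y - gx x y'‖ ≤ Lxy * dist y y') ∧
  (∀ y ∈ Y, ∀ x ∈ X, ∀ x' ∈ X, ‖gy x y - gy x' y‖ ≤ Lxy * dist x x')

end MinMax

/-- Euclidean projection onto the closed ball of radius `D` centred at the origin
of a tangent space. -/
def projBall {E : Type*} [NormedAddCommGroup E] [Module ℝ E] (D : ℝ) (v : E) : E :=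
  if ‖v‖ ≤ D then v else (D / ‖v‖) • v

/-- A uniquely geodesic metric space: a metric space equipped with a (unique) geodesic
`geo x y : [0,1] → M` joining any two points, parametrized proportionally to arc length. -/
structure GeodesicSystem (M : Type*) [MetricSpace M] where
  /-- The geodesic from `x` to `y`. -/
  geo : M → M → ℝ → M
  geo_zero : ∀ x y, geo x y 0 = x
  geo_one : ∀ x y, geo x y 1 = y
  dist_geo : ∀ x y, ∀ s ∈ Set.Icc (0 : ℝ) 1, ∀ t ∈ Set.Icc (0 : ℝ) 1,
    dist (geo x y s) (geo x y t) = |s - t| * dist x y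

/-- Geodesic convexity of a set in a uniquely geodesic metric space. -/
def GeodesicSystem.GConvex {M : Type*} [MetricSpace M] (G : GeodesicSystem M)
    (X : Set M) : Prop :=
  ∀ ⦃x⦄, x ∈ X → ∀ ⦃y⦄, y ∈ X → ∀ t ∈ Set.Icc (0 : ℝ) 1, G.geo x y t ∈ X


section SionAux

variable {M : Type*} [MetricSpace M]

/-- A geodesic is continuous on `[0,1]`. -/
lemma GeodesicSystem.geo_continuousOn (G : GeodesicSystem M) (x y : M) :
    ContinuousOn (G.geo x y) (Set.Icc (0:ℝ) 1) := by
  refine LipschitzOnWith.continuousOn (K := Real.toNNReal (dist x y)) ?_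
  rw [lipschitzOnWith_iff_dist_le_mul]
  intro s hs t ht
  rw [G.dist_geo x y s hs t ht, Real.dist_eq, Real.coe_toNNReal _ dist_nonneg]
  exact le_of_eq (mul_comm _ _)

/-- A geodesically convex set is preconnected. -/
lemma GeodesicSystem.GConvex.isPreconnected {G : GeodesicSystem M} {S : Set M}
    (hS : G.GConvex S) : IsPreconnected S := by
  rcases S.eq_empty_or_nonempty with h | ⟨x0, hx0⟩
  · exact h ▸ isPreconnected_empty
  · have hpc : IsPathConnected S := by
      refine ⟨x0, hx0, fun {y} hy => ?_⟩
      refine ⟨⟨⟨fun t => G.geo x0 y t, ?_⟩, by simpa using G.geo_zero x0 y,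
        by simpa using G.geo_one x0 y⟩, fun t => hS hx0 hy t t.2⟩
      exact (G.geo_continuousOn x0 y).comp_continuous continuous_subtype_val (fun t => t.2)
    exact hpc.isConnected.isPreconnected

lemma GeodesicSystem.GConvex.inter {G : GeodesicSystem M} {S T : Set M}
    (hS : G.GConvex S) (hT : G.GConvex T) : G.GConvex (S ∩ T) :=
  fun _ hx _ hy t ht => ⟨hS hx.1 hy.1 t ht, hT hx.2 hy.2 t ht⟩

/-- Sublevel sets of a lower semicontinuous function are relatively closed. -/
lemma lsc_sublevel_eq_inter_closed {X : Set M} {g : M → ℝ}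
    (h : LowerSemicontinuousOn g X) (c : ℝ) :
    ∃ F : Set M, IsClosed F ∧ {x ∈ X | g x ≤ c} = X ∩ F := by
  set S := {x ∈ X | g x ≤ c} with hSdef
  refine ⟨closure S, isClosed_closure, ?_⟩
  apply Set.Subset.antisymm
  · exact fun x hx => ⟨hx.1, subset_closure hx⟩
  · rintro x ⟨hxX, hxcl⟩
    refine ⟨hxX, ?_⟩
    by_contra hgc
    push_neg at hgc
    have hev : ∀ᶠ x' in nhdsWithin x X, c < g x' := h x hxX c hgc
    have hne : (nhdsWithin x S).NeBot := mem_closure_iff_nhdsWithin_neBot.mp hxcl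
    have hev' : ∀ᶠ x' in nhdsWithin x S, c < g x' :=
      hev.filter_mono (nhdsWithin_mono x (fun y hy => hy.1))
    have hmem : ∀ᶠ x' in nhdsWithin x S, x' ∈ S := eventually_mem_nhdsWithin
    rcases (hev'.and hmem).exists with ⟨x', hx'1, hx'2⟩
    exact absurd hx'2.2 (not_le.mpr hx'1)

/-- A preconnected set covered by two closed sets meeting it disjointly lies in one of them. -/
lemma preconnected_subset_or {B F1 F2 : Set M} (hB : IsPreconnected B)
    (h1 : IsClosed F1) (h2 : IsClosed F2) (hcov : B ⊆ F1 ∪ F2)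
    (hdisj : B ∩ F1 ∩ F2 = ∅) : B ⊆ F1 ∨ B ⊆ F2 := by
  by_contra hcon
  push_neg at hcon
  obtain ⟨hn1, hn2⟩ := hcon
  obtain ⟨a, haB, haF1⟩ := Set.not_subset.mp hn1
  obtain ⟨b, hbB, hbF2⟩ := Set.not_subset.mp hn2
  have hdisj' : ∀ x ∈ B, x ∈ F1 → x ∈ F2 → False := by
    intro x hx h1x h2x
    have hxm : x ∈ B ∩ F1 ∩ F2 := ⟨⟨hx, h1x⟩, h2x⟩
    rw [hdisj] at hxm
    exact hxm
  have h := hB F2ᶜ F1ᶜ h2.isOpen_compl h1.isOpen_compl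
    (by intro x hx
        by_cases h1x : x ∈ F1
        · exact Or.inl (fun h2x => hdisj' x hx h1x h2x)
        · exact Or.inr h1x)
    ⟨b, hbB, hbF2⟩ ⟨a, haB, haF1⟩
  rcases h with ⟨x, hxB, hx2, hx1⟩
  rcases hcov hxB with h | h
  · exact hx1 h
  · exact hx2 h

variable {N : Type*} [MetricSpace N]

/-- Two-point case of the key lemma. -/
lemma sion_two (GM : GeodesicSystem M) (GN : GeodesicSystem N)
    (X : Set M) (Y : Set N) (hY : GN.GConvex Y)
    (f : M → N → ℝ)
    (hlsc : ∀ y ∈ Y, LowerSemicontinuousOn (fun x => f x y) X)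
    (hqcvx : ∀ y ∈ Y, ∀ α : ℝ, GM.GConvex {x ∈ X | f x y ≤ α})
    (husc : ∀ x ∈ X, UpperSemicontinuousOn (fun y => f x y) Y)
    (hqccv : ∀ x ∈ X, ∀ α : ℝ, GN.GConvex {y ∈ Y | α ≤ f x y})
    (y1 y2 : N) (hy1 : y1 ∈ Y) (hy2 : y2 ∈ Y)
    (α γ : ℝ) (hαγ : α < γ)
    (hcov : ∀ x ∈ X, γ ≤ f x y1 ∨ γ ≤ f x y2) :
    ∃ y₀ ∈ Y, ∀ x ∈ X, α < f x y₀ := by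
  by_contra hcon
  push_neg at hcon
  -- for every y ∈ Y there is x ∈ X with f x y ≤ α
  have hA : ∀ y ∈ Y, ∃ x ∈ X, f x y ≤ α := hcon
  set γ' : ℝ := (α + γ) / 2 with hγ'def
  have hαγ' : α < γ' := by simp only [hγ'def]; linarith
  have hγ'γ : γ' < γ := by simp only [hγ'def]; linarith
  set z : ℝ → N := fun t => GN.geo y1 y2 t with hzdef
  have hzY : ∀ t ∈ Set.Icc (0:ℝ) 1, z t ∈ Y := fun t ht => hY hy1 hy2 t ht
  set B : ℝ → Set M := fun t => {x ∈ X | f x (z t) ≤ γ'} with hBdef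
  set C1 : Set M := {x ∈ X | f x y1 ≤ γ'} with hC1def
  set C2 : Set M := {x ∈ X | f x y2 ≤ γ'} with hC2def
  have hC12 : C1 ∩ C2 = ∅ := by
    ext x
    simp only [Set.mem_inter_iff, Set.mem_setOf_eq, Set.mem_empty_iff_false, iff_false]
    rintro ⟨⟨hxX, h1⟩, _, h2⟩
    rcases hcov x hxX with h | h
    · exact absurd h (not_le.mpr (lt_of_le_of_lt h1 hγ'γ))
    · exact absurd h (not_le.mpr (lt_of_le_of_lt h2 hγ'γ))
  obtain ⟨F1, hF1cl, hF1⟩ := lsc_sublevel_eq_inter_closed (hlsc y1 hy1) γ'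
  obtain ⟨F2, hF2cl, hF2⟩ := lsc_sublevel_eq_inter_closed (hlsc y2 hy2) γ'
  -- nonemptiness of B t
  have hBne : ∀ t ∈ Set.Icc (0:ℝ) 1, (B t).Nonempty := by
    intro t ht
    obtain ⟨x, hxX, hxα⟩ := hA (z t) (hzY t ht)
    exact ⟨x, hxX, le_trans hxα (le_of_lt hαγ')⟩
  -- dichotomy
  have hdich : ∀ t ∈ Set.Icc (0:ℝ) 1, B t ⊆ C1 ∨ B t ⊆ C2 := by
    intro t ht
    have hBC : B t ⊆ C1 ∪ C2 := by
      rintro x ⟨hxX, hxγ'⟩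
      by_contra hx12
      simp only [hC1def, hC2def, Set.mem_union, Set.mem_setOf_eq, not_or] at hx12
      obtain ⟨h1, h2⟩ := hx12
      have h1' : γ' < f x y1 := by
        by_contra h; push_neg at h; exact h1 ⟨hxX, h⟩
      have h2' : γ' < f x y2 := by
        by_contra h; push_neg at h; exact h2 ⟨hxX, h⟩
      -- superlevel set of min is g-convex and contains y1, y2
      have hsup := hqccv x hxX (min (f x y1) (f x y2))
      have hz : z t ∈ {y ∈ Y | min (f x y1) (f x y2) ≤ f x y} :=
        hsup ⟨hy1, min_le_left _ _⟩ ⟨hy2, min_le_right _ _⟩ t ht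
      rcases min_le_iff.mp (le_trans hz.2 hxγ') with h | h
      · linarith
      · linarith
    have hBF : B t ⊆ F1 ∪ F2 := by
      intro x hx
      rcases hBC hx with h | h
      · exact Or.inl (by rw [hC1def, hF1] at h; exact h.2)
      · exact Or.inr (by rw [hC2def, hF2] at h; exact h.2)
    have hBdisj : B t ∩ F1 ∩ F2 = ∅ := by
      ext x
      simp only [Set.mem_inter_iff, Set.mem_empty_iff_false, iff_false]
      rintro ⟨⟨hxB, hxF1⟩, hxF2⟩
      have hx1 : x ∈ C1 := by rw [hC1def, hF1]; exact ⟨hxB.1, hxF1⟩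
      have hx2 : x ∈ C2 := by rw [hC2def, hF2]; exact ⟨hxB.1, hxF2⟩
      have := hC12 ▸ (Set.mem_inter hx1 hx2)
      exact this
    have hpre : IsPreconnected (B t) :=
      GeodesicSystem.GConvex.isPreconnected (hqcvx (z t) (hzY t ht) γ')
    rcases preconnected_subset_or hpre hF1cl hF2cl hBF hBdisj with h | h
    · left; intro x hx
      rw [hC1def, hF1]; exact ⟨hx.1, h hx⟩
    · right; intro x hx
      rw [hC2def, hF2]; exact ⟨hx.1, h hx⟩
  -- closedness of the two parts
  have hclos : ∀ C C' : Set M, (∀ s ∈ Set.Icc (0:ℝ) 1, B s ⊆ C ∨ B s ⊆ C') →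
      C ∩ C' = ∅ → IsClosed {t ∈ Set.Icc (0:ℝ) 1 | B t ⊆ C} := by
    intro C C' hd hCC'
    set I : Set ℝ := {t ∈ Set.Icc (0:ℝ) 1 | B t ⊆ C} with hIdef
    apply isClosed_of_closure_subset
    intro t htcl
    have hIcc : I ⊆ Set.Icc (0:ℝ) 1 := fun s hs => hs.1
    have htI : t ∈ Set.Icc (0:ℝ) 1 :=
      isClosed_Icc.closure_subset ((closure_mono hIcc) htcl)
    refine ⟨htI, ?_⟩
    rcases hd t htI with h | h
    · exact h
    · -- contradiction: B t ⊆ C'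
      exfalso
      obtain ⟨x, hxX, hxα⟩ := hA (z t) (hzY t htI)
      have hxBt : x ∈ B t := ⟨hxX, le_trans hxα (le_of_lt hαγ')⟩
      have hxC' : x ∈ C' := h hxBt
      -- upper semicontinuity in y gives a nearby s ∈ I with x ∈ B s ⊆ C
      have husc' := husc x hxX (z t) (hzY t htI) γ' (lt_of_le_of_lt hxα hαγ')
      have hzc : ContinuousWithinAt z (Set.Icc (0:ℝ) 1) t :=
        (GN.geo_continuousOn y1 y2) t htI
      have htend : Filter.Tendsto z (nhdsWithin t (Set.Icc (0:ℝ) 1))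
          (nhdsWithin (z t) Y) :=
        hzc.tendsto_nhdsWithin (fun s hs => hzY s hs)
      have hev : ∀ᶠ s in nhdsWithin t (Set.Icc (0:ℝ) 1), f x (z s) < γ' :=
        htend.eventually husc'
      have hne : (nhdsWithin t I).NeBot := mem_closure_iff_nhdsWithin_neBot.mp htcl
      have hev' : ∀ᶠ s in nhdsWithin t I, f x (z s) < γ' :=
        hev.filter_mono (nhdsWithin_mono t hIcc)
      have hmem : ∀ᶠ s in nhdsWithin t I, s ∈ I := eventually_mem_nhdsWithin
      rcases (hev'.and hmem).exists with ⟨s, hs1, hs2⟩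
      have hxBs : x ∈ B s := ⟨hxX, le_of_lt hs1⟩
      have hxC : x ∈ C := hs2.2 hxBs
      have := hCC' ▸ (Set.mem_inter hxC hxC')
      exact this
  set I : Set ℝ := {t ∈ Set.Icc (0:ℝ) 1 | B t ⊆ C1} with hIdef
  set J : Set ℝ := {t ∈ Set.Icc (0:ℝ) 1 | B t ⊆ C2} with hJdef
  have hIc : IsClosed I := hclos C1 C2 hdich hC12
  have hJc : IsClosed J := hclos C2 C1 (fun s hs => (hdich s hs).symm)
    (by rw [Set.inter_comm]; exact hC12)
  have h0I : (0:ℝ) ∈ I := by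
    refine ⟨Set.left_mem_Icc.mpr zero_le_one, ?_⟩
    intro x hx
    have : z 0 = y1 := GN.geo_zero y1 y2
    rw [hC1def]
    exact ⟨hx.1, by rw [← this]; exact hx.2⟩
  have h1J : (1:ℝ) ∈ J := by
    refine ⟨Set.right_mem_Icc.mpr zero_le_one, ?_⟩
    intro x hx
    have : z 1 = y2 := GN.geo_one y1 y2
    rw [hC2def]
    exact ⟨hx.1, by rw [← this]; exact hx.2⟩
  have hcover : Set.Icc (0:ℝ) 1 ⊆ I ∪ J := by
    intro t ht
    rcases hdich t ht with h | h
    · exact Or.inl ⟨ht, h⟩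
    · exact Or.inr ⟨ht, h⟩
  have hIJ : Set.Icc (0:ℝ) 1 ∩ I ∩ J = ∅ := by
    ext t
    simp only [Set.mem_inter_iff, Set.mem_empty_iff_false, iff_false]
    rintro ⟨⟨ht, htI⟩, htJ⟩
    obtain ⟨x, hx⟩ := hBne t ht
    have := hC12 ▸ (Set.mem_inter (htI.2 hx) (htJ.2 hx))
    exact this
  have hpre : IsPreconnected (Set.Icc (0:ℝ) 1) := isPreconnected_Icc
  rw [isPreconnected_closed_iff] at hpre
  have := hpre I J hIc hJc hcover ⟨0, Set.left_mem_Icc.mpr zero_le_one, h0I⟩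
    ⟨1, Set.right_mem_Icc.mpr zero_le_one, h1J⟩
  rcases this with ⟨t, ht⟩
  have : t ∈ (∅ : Set ℝ) := hIJ ▸ (by exact ⟨⟨ht.1, ht.2.1⟩, ht.2.2⟩)
  exact this

/-- Finitely many points, with a uniform gap. -/
lemma sion_aux (GM : GeodesicSystem M) (GN : GeodesicSystem N)
    (Y : Set N) (hY : GN.GConvex Y) (f : M → N → ℝ) :
    ∀ k : ℕ, ∀ X : Set M, GM.GConvex X →
    (∀ y ∈ Y, LowerSemicontinuousOn (fun x => f x y) X) →
    (∀ y ∈ Y, ∀ α : ℝ, GM.GConvex {x ∈ X | f x y ≤ α}) →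
    (∀ x ∈ X, UpperSemicontinuousOn (fun y => f x y) Y) →
    (∀ x ∈ X, ∀ α : ℝ, GN.GConvex {y ∈ Y | α ≤ f x y}) →
    ∀ ys : Fin (k+1) → N, (∀ i, ys i ∈ Y) →
    ∀ α β : ℝ, α < β →
    (∀ x ∈ X, ∃ i, β ≤ f x (ys i)) →
    ∃ y₀ ∈ Y, ∀ x ∈ X, α < f x y₀ := by
  intro k
  induction k with
  | zero =>
    intro X hX hlsc hqcvx husc hqccv ys hys α β hαβ hbound
    refine ⟨ys 0, hys 0, fun x hx => ?_⟩
    obtain ⟨i, hi⟩ := hbound x hx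
    have : i = 0 := Fin.fin_one_eq_zero i
    rw [this] at hi
    exact lt_of_lt_of_le hαβ hi
  | succ n IH =>
    intro X hX hlsc hqcvx husc hqccv ys hys α β hαβ hbound
    set γ : ℝ := (α + β) / 2 with hγdef
    have hαγ : α < γ := by simp only [hγdef]; linarith
    have hγβ : γ < β := by simp only [hγdef]; linarith
    set yl : N := ys (Fin.last (n+1)) with hyldef
    set X' : Set M := {x ∈ X | f x yl ≤ γ} with hX'def
    rcases Set.eq_empty_or_nonempty X' with hXe | hXne
    · -- all x have γ < f x yl
      refine ⟨yl, hys _, fun x hx => ?_⟩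
      by_contra h
      push_neg at h
      have : x ∈ X' := ⟨hx, le_trans h (le_of_lt hαγ)⟩
      rw [hXe] at this
      exact this
    · have hX'X : X' ⊆ X := fun x hx => hx.1
      have hX'conv : GM.GConvex X' := hqcvx yl (hys _) γ
      have hlsc' : ∀ y ∈ Y, LowerSemicontinuousOn (fun x => f x y) X' :=
        fun y hy => (hlsc y hy).mono hX'X
      have hqcvx' : ∀ y ∈ Y, ∀ a : ℝ, GM.GConvex {x ∈ X' | f x y ≤ a} := by
        intro y hy a
        have : {x ∈ X' | f x y ≤ a} = X' ∩ {x ∈ X | f x y ≤ a} := by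
          ext x
          simp only [Set.mem_setOf_eq, Set.mem_inter_iff, hX'def]
          tauto
        rw [this]
        exact hX'conv.inter (hqcvx y hy a)
      have husc' : ∀ x ∈ X', UpperSemicontinuousOn (fun y => f x y) Y :=
        fun x hx => husc x (hX'X hx)
      have hqccv' : ∀ x ∈ X', ∀ a : ℝ, GN.GConvex {y ∈ Y | a ≤ f x y} :=
        fun x hx => hqccv x (hX'X hx)
      have hbound' : ∀ x ∈ X', ∃ i : Fin (n+1), β ≤ f x (ys i.castSucc) := by
        intro x hx
        obtain ⟨i, hi⟩ := hbound x (hX'X hx)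
        rcases eq_or_ne i (Fin.last (n+1)) with rfl | hne
        · exact absurd hi (not_le.mpr (lt_of_le_of_lt hx.2 hγβ))
        · obtain ⟨j, rfl⟩ := Fin.exists_castSucc_eq.mpr hne
          exact ⟨j, hi⟩
      obtain ⟨y', hy'Y, hy'⟩ := IH X' hX'conv hlsc' hqcvx' husc' hqccv'
        (fun i => ys i.castSucc) (fun i => hys _) γ β hγβ hbound'
      -- now the two-point lemma with y' and yl
      refine sion_two GM GN X Y hY f hlsc hqcvx husc hqccv y' yl hy'Y (hys _)
        α γ hαγ ?_
      intro x hx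
      rcases le_or_gt γ (f x yl) with h | h
      · exact Or.inr h
      · exact Or.inl (le_of_lt (hy' x ⟨hx, le_of_lt h⟩))

end SionAux

/-- **Finite intersection lemma for quasi g-convex/quasi g-concave functions**
(Lemma used in the proof of the generalized Sion theorem): if
`α < min_{x ∈ X} max_{i ∈ [k]} f(x, y_i)` (the minimum being attained at `xbar`), then
there is a single point `y₀ ∈ Y` with `α < min_{x ∈ X} f(x, y₀)`. -/
theorem exists_point_of_finite_max
    {M N : Type*} [MetricSpace M] [MetricSpace N]
    (GM : GeodesicSystem M) (GN : GeodesicSystem N)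
    (X : Set M) (Y : Set N) (hX : GM.GConvex X) (hY : GN.GConvex Y)
    (f : M → N → ℝ)
    (hlsc : ∀ y ∈ Y, LowerSemicontinuousOn (fun x => f x y) X)
    (hqcvx : ∀ y ∈ Y, ∀ α : ℝ, GM.GConvex {x ∈ X | f x y ≤ α})
    (husc : ∀ x ∈ X, UpperSemicontinuousOn (fun y => f x y) Y)
    (hqccv : ∀ x ∈ X, ∀ α : ℝ, GN.GConvex {y ∈ Y | α ≤ f x y})
    (k : ℕ) (hk : 0 < k) (ys : Fin k → N) (hys : ∀ i, ys i ∈ Y)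
    (α : ℝ) (xbar : M) (hxbar : xbar ∈ X)
    -- `xbar` attains `min_{x∈X} max_i f(x, y_i)` ...
    (hmin : ∀ x ∈ X,
      Finset.univ.sup' ⟨⟨0, hk⟩, Finset.mem_univ _⟩ (fun i => f xbar (ys i)) ≤
      Finset.univ.sup' ⟨⟨0, hk⟩, Finset.mem_univ _⟩ (fun i => f x (ys i)))
    -- ... and `α` is below this minimum
    (hα : α < Finset.univ.sup' ⟨⟨0, hk⟩, Finset.mem_univ _⟩ (fun i => f xbar (ys i))) :
    ∃ y₀ ∈ Y, ∀ x ∈ X, α < f x y₀  := by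
  classical
  set H : Finset.Nonempty (Finset.univ : Finset (Fin k)) := ⟨⟨0, hk⟩, Finset.mem_univ _⟩
  set v : ℝ := Finset.univ.sup' H (fun i => f xbar (ys i)) with hvdef
  have hbound : ∀ x ∈ X, ∃ i, v ≤ f x (ys i) := by
    intro x hx
    obtain ⟨i, _, hi⟩ := Finset.exists_mem_eq_sup' H (fun i => f x (ys i))
    exact ⟨i, le_trans (hmin x hx) (le_of_eq hi)⟩
  have hkk : k - 1 + 1 = k := Nat.succ_pred_eq_of_pos hk
  have := sion_aux GM GN Y hY f (k - 1) X hX hlsc hqcvx husc hqccv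
    (fun i => ys (Fin.cast hkk i)) (fun i => hys _) α v hα ?_
  · exact this
  · intro x hx
    obtain ⟨i, hi⟩ := hbound x hx
    refine ⟨Fin.cast hkk.symm i, ?_⟩
    simpa using hi
end
end

section
/- The saddle point of the proximally regularized problem is no farther from the proximal center than the unregularized saddle point: Let M, N be Hadamard manifolds and f : M × N → ℝ be SCSC and smooth (as in the paper's setting) with unconstrained saddle point (x*,y*). For η > 0 and (x̃,ỹ) ∈ M × N, let h(x,y) := f(x,y) + d²(x̃,x)/(2η) − d²(ỹ,y)/(2η), and let (x̃*,ỹ*) be the saddle point of h over M × N. Then d²(x̃,x̃*) + d²(ỹ,ỹ*) ≤ d²(x̃,x*) + d²(ỹ,y*). -/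
/-!
Formalization of a statement from
"Accelerated Methods for Riemannian Min-Max Optimization Ensuring Bounded
Geometric Penalties".

Since Mathlib does not yet provide Riemannian geometry, we work with an
abstract model `RiemannianModel M E` of a uniquely geodesic Riemannian
manifold (in particular of a Hadamard manifold): a metric space `M` together
with an exponential map, its inverse `log`, and parallel transport, where all
tangent spaces are identified with a fixed real inner-product space `E`.
-/

noncomputable section

open scoped RealInnerProductSpace

/-- **The saddle point of the proximally regularized problem is no farther from the
proximal centre than the unregularized saddle point (Lemma `lem:dist-bound`).**
For `h(x,y) = f(x,y) + d²(x̃,x)/(2η) − d²(ỹ,y)/(2η)` with saddle point `(x̃*,ỹ*)`,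
one has `d²(x̃,x̃*) + d²(ỹ,ỹ*) ≤ d²(x̃,x*) + d²(ỹ,y*)`. -/
theorem prox_saddle_no_farther
    {M N E F : Type*} [MetricSpace M] [MetricSpace N]
    [NormedAddCommGroup E] [InnerProductSpace ℝ E]
    [NormedAddCommGroup F] [InnerProductSpace ℝ F]
    (RM : RiemannianModel M E) (RN : RiemannianModel N F)
    (hHadM : RM.HadamardComparison) (hHadN : RN.HadamardComparison)
    (f : M → N → ℝ) (gx : M → N → E) (gy : M → N → F)
    (μx μy Lx Ly Lxy : ℝ) (hμx : 0 < μx) (hμy : 0 < μy)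
    -- f is SCSC and smooth (on the whole product manifold, as in the paper's setting)
    (hSCSC : IsSCSCOn RM RN Set.univ Set.univ f μx μy)
    (hSmooth : IsSmoothPairOn RM RN Set.univ Set.univ gx gy Lx Ly Lxy)
    -- the unconstrained saddle point of f
    (xs : M) (ys : N)
    (hsaddle : ∀ x y, f xs y ≤ f xs ys ∧ f xs ys ≤ f x ys)
    -- proximal centre and parameter
    (η : ℝ) (hη : 0 < η) (xt : M) (yt : N)
    -- (x̃*, ỹ*) is the saddle point of h(x,y) = f(x,y) + d²(x̃,x)/(2η) − d²(ỹ,y)/(2η)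
    (xts : M) (yts : N)
    (hsaddleh : ∀ x y,
      f xts y + dist xt xts ^ 2 / (2 * η) - dist yt y ^ 2 / (2 * η) ≤
        f xts yts + dist xt xts ^ 2 / (2 * η) - dist yt yts ^ 2 / (2 * η) ∧
      f xts yts + dist xt xts ^ 2 / (2 * η) - dist yt yts ^ 2 / (2 * η) ≤
        f x yts + dist xt x ^ 2 / (2 * η) - dist yt yts ^ 2 / (2 * η)) :
    dist xt xts ^ 2 + dist yt yts ^ 2 ≤ dist xt xs ^ 2 + dist yt ys ^ 2 := by
  have h1 := (hsaddleh xs ys).1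
  have h2 := (hsaddleh xs ys).2
  have h3 : f xs yts ≤ f xts ys := le_trans (hsaddle xts yts).1 (hsaddle xts yts).2
  have key : dist xt xts ^ 2 / (2 * η) - dist yt ys ^ 2 / (2 * η) ≤
      dist xt xs ^ 2 / (2 * η) - dist yt yts ^ 2 / (2 * η) := by linarith
  have h2η : 0 < 2 * η := by linarith
  have := mul_le_mul_of_nonneg_right key (le_of_lt h2η)
  field_simp at this
  linarith
end
end
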